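/- Let n ≥ 2 and let g = z⁴·tₙ(tₙ − 1)² − t₁t₂⋯t_{n−1}(t₁ − 1)²(t₂ − 1)²⋯(t_{n−1} − 1)² ∈ ℂ[t₁,…,tₙ,z]. Then the quotient ring ℂ[t₁,…,tₙ,z]/(g) is an integral domain, and its field of fractions is isomorphic as a ℂ-algebra to the field ℂ(s₁,…,sₙ) of rational functions in n variables over ℂ. -/

import Mathlib

/-!
Work over a field `k` of characteristic zero, with `m = n - 1` and `p = n - 2`. Put
`α = (tₘ - 1)/(tₚ - 1)`, i.e. pass to the blow-up chart `tₘ = 1 + α (tₚ - 1)`. There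
`g = (tₚ - 1)² g₁` with `g₁ = (z⁴α³ - P) tₚ + z⁴α²(1 - α)` and `P = ∏_{i ≠ m, p} tᵢ(tᵢ - 1)²`,
which is linear in `tₚ` with coprime coefficients in the UFD `k[z, α, tᵢ]`. By Gauss's lemma `g₁`
generates the kernel of the map sending `tₚ` to its root in `k(z, α, tᵢ)`. The chart map becomes
invertible once `tₚ - 1` is inverted and `tₚ - 1` does not divide `g`, so the kernel of the
composite `k[t, z] → k(z, α, tᵢ)` is `(g)`. Its image generates the field (`α` is recovered as a
quotient), so `k[t, z]/(g)` is a domain whose fraction field is the rational function field in the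
`n` variables `z, α, tᵢ`.
-/

open MvPolynomial

theorem Polynomial.C_mul_X_add_C_dvd_iff_aeval_eq_zero {V K : Type*} [CommRing V] [IsDomain V]
    [IsGCDMonoid V] [Field K] [Algebra V K] [IsFractionRing V K] {a b : V} (hab : IsRelPrime a b)
    {β : K} (hβ : algebraMap V K a * β + algebraMap V K b = 0) (q : Polynomial V) :
    C a * X + C b ∣ q ↔ aeval β q = 0 := by
  have ha : a ≠ 0 := by
    rintro rfl
    have hb : b = 0 := by simpa using hβ
    exact not_isRelPrime_zero_zero (hb ▸ hab)
  have hprim : (C a * X + C b).IsPrimitive := by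
    refine isPrimitive_iff_isUnit_of_C_dvd.mpr fun r hr => hab ?_ ?_
    · simpa using (C_dvd_iff_dvd_coeff r _).mp hr 1
    · simpa using (C_dvd_iff_dvd_coeff r _).mp hr 0
  have hmap : (C a * X + C b).map (algebraMap V K) = C (algebraMap V K a) * (X - C β) := by
    simp only [Polynomial.map_add, Polynomial.map_mul, map_C, map_X]
    rw [eq_neg_of_add_eq_zero_right hβ, map_neg, map_mul]
    ring
  have hunit : IsUnit (C (algebraMap V K a)) :=
    isUnit_C.mpr (isUnit_iff_ne_zero.mpr (IsFractionRing.to_map_eq_zero_iff.not.mpr ha))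
  rw [hprim.dvd_iff_fraction_map_dvd_fraction_map K, hmap, hunit.mul_left_dvd, dvd_iff_isRoot,
    IsRoot, eval_map_algebraMap]

theorem RingHom.ker_comp_eq_span_singleton {R S : Type*} [CommRing R] [DecompositionMonoid R]
    [CommRing S] {φ : R →+* R} (hφ : Function.Injective φ) {ψ : R →+* S} {u g g₁ : R} {a : ℕ}
    (hψ : RingHom.ker ψ = Ideal.span {g₁}) (hφu : φ u = u) (hφg : φ g = u ^ a * g₁)
    (hgu : IsRelPrime g u) (hφ_range : ∀ w, ∃ j t, φ t = u ^ j * w) :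
    RingHom.ker (ψ.comp φ) = Ideal.span {g} := by
  ext f
  rw [RingHom.mem_ker, Ideal.mem_span_singleton, RingHom.comp_apply, ← RingHom.mem_ker, hψ,
    Ideal.mem_span_singleton]
  constructor
  · rintro ⟨w, hw⟩
    obtain ⟨j, t, ht⟩ := hφ_range w
    have hft : u ^ (a + j) * f = g * t :=
      hφ (by rw [map_mul, map_mul, map_pow, hφu, hφg, ht, hw]; ring)
    exact hgu.pow_right.dvd_of_dvd_mul_left ⟨t, hft⟩
  · rintro ⟨t, rfl⟩
    exact ⟨u ^ a * φ t, by rw [map_mul, hφg]; ring⟩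

namespace MvPolynomial

variable {R σ : Type*} [CommRing R]

theorem irreducible_X_sub_C [IsDomain R] (k : σ) (a : R) :
    Irreducible (X k - C a : MvPolynomial σ R) := by
  classical
  have hcoeff : coeff (Finsupp.single k 1) (X k - C a : MvPolynomial σ R) = 1 := by
    simp [coeff_X, coeff_C, (Finsupp.single_ne_zero.mpr one_ne_zero).symm]
  refine irreducible_of_totalDegree_eq_one (le_antisymm ?_ ?_)
    fun x hx => isUnit_of_dvd_one (hcoeff ▸ hx _)
  · exact (totalDegree_sub_C_le _ _).trans (totalDegree_X k).le
  · have := le_totalDegree (mem_support_iff.mpr (hcoeff ▸ one_ne_zero))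
    rwa [Finsupp.sum_single_index rfl] at this

variable [DecidableEq σ]

/-- The chart of the blow-up of `{tᵢ = 1, tₖ = 1}` on which `tᵢ - 1 = tᵢ' (tₖ - 1)`. -/
noncomputable def blowUpChart (i k : σ) : MvPolynomial σ R →ₐ[R] MvPolynomial σ R :=
  aeval (Function.update X i (1 + X i * (X k - 1)))

@[simp]
theorem blowUpChart_X_self (i k : σ) :
    blowUpChart i k (X i : MvPolynomial σ R) = 1 + X i * (X k - 1) := by
  simp [blowUpChart]

@[simp]
theorem blowUpChart_X_of_ne {i j : σ} (k : σ) (h : j ≠ i) :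
    blowUpChart i k (X j : MvPolynomial σ R) = X j := by
  simp [blowUpChart, h]

theorem blowUpChart_injective [IsDomain R] {i k : σ} (hik : i ≠ k) :
    Function.Injective (blowUpChart i k : MvPolynomial σ R → MvPolynomial σ R) := by
  set ι := algebraMap (MvPolynomial σ R) (FractionRing (MvPolynomial σ R))
  have hu : ι (X k) - 1 ≠ 0 := by
    rw [← map_one ι, ← map_sub, ne_eq, IsFractionRing.to_map_eq_zero_iff, ← map_one C]
    exact (irreducible_X_sub_C k 1).ne_zero
  let inv : MvPolynomial σ R →ₐ[R] FractionRing (MvPolynomial σ R) :=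
    aeval (Function.update (fun j => ι (X j)) i ((ι (X i) - 1) / (ι (X k) - 1)))
  have hinv : inv.comp (blowUpChart i k) = IsScalarTower.toAlgHom R _ _ := by
    ext j
    show inv (blowUpChart i k (X j)) = ι (X j)
    by_cases hj : j = i
    · subst hj
      simp [inv, Function.update_of_ne hik.symm, div_mul_cancel₀ _ hu]
    · simp [inv, hj]
  refine Function.Injective.of_comp (f := inv) ?_
  rw [← AlgHom.coe_comp, hinv]
  exact IsFractionRing.injective _ _

theorem exists_blowUpChart_eq_pow_mul {i k : σ} (hik : i ≠ k) (w : MvPolynomial σ R) :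
    ∃ j t, blowUpChart i k t = (X k - 1) ^ j * w := by
  induction w using MvPolynomial.induction_on with
  | C a => exact ⟨0, C a, by simp⟩
  | add f f' hf hf' =>
    obtain ⟨j, t, ht⟩ := hf
    obtain ⟨j', t', ht'⟩ := hf'
    refine ⟨j + j', (X k - 1) ^ j' * t + (X k - 1) ^ j * t', ?_⟩
    simp only [map_add, map_mul, map_pow, map_sub, map_one, blowUpChart_X_of_ne k hik.symm, ht, ht']
    ring
  | mul_X f l hf =>
    obtain ⟨j, t, ht⟩ := hf
    by_cases hl : l = i
    · subst hl
      refine ⟨j + 1, t * (X l - 1), ?_⟩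
      simp only [map_mul, map_sub, map_one, blowUpChart_X_self, ht]
      ring
    · exact ⟨j, t * X l, by rw [map_mul, ht, blowUpChart_X_of_ne k hl, mul_assoc]⟩

end MvPolynomial

theorem IntermediateField.eq_top_of_algebraMap_X_mem {k ι : Type*} [Field k]
    {E : IntermediateField k (FractionRing (MvPolynomial ι k))}
    (hE : ∀ i, algebraMap (MvPolynomial ι k) _ (X i) ∈ E) : E = ⊤ := by
  let S : Subalgebra k (MvPolynomial ι k) :=
    E.toSubalgebra.comap (IsScalarTower.toAlgHom k _ (FractionRing (MvPolynomial ι k)))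
  have hS : S = ⊤ := by
    rw [eq_top_iff, ← adjoin_range_X, Algebra.adjoin_le_iff]
    rintro _ ⟨i, rfl⟩
    exact hE i
  refine eq_top_iff.mpr fun x _ => ?_
  obtain ⟨a, b, -, rfl⟩ := IsFractionRing.div_surjective (MvPolynomial ι k) x
  exact div_mem (hS ▸ Algebra.mem_top : a ∈ S) (hS ▸ Algebra.mem_top : b ∈ S)

theorem nonempty_fractionRing_quotient_ker_algEquiv {k A K : Type*} [Field k] [CommRing A]
    [Algebra k A] [Field K] [Algebra k K] (ψ : A →ₐ[k] K)
    (hψ : IntermediateField.adjoin k (Set.range ψ) = ⊤) :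
    Nonempty (FractionRing (A ⧸ RingHom.ker ψ) ≃ₐ[k] K) := by
  have : (RingHom.ker ψ).IsPrime := RingHom.ker_isPrime ψ
  let τ := IsFractionRing.liftAlgHom (K := FractionRing (A ⧸ RingHom.ker ψ))
    (Ideal.kerLiftAlg_injective ψ)
  have hτ : τ.fieldRange = ⊤ := by
    rw [eq_top_iff, ← hψ, IntermediateField.adjoin_le_iff]
    rintro _ ⟨a, rfl⟩
    exact ⟨algebraMap _ _ (Ideal.Quotient.mk (RingHom.ker ψ) a), by
      change τ _ = _
      rw [IsFractionRing.liftAlgHom_apply, IsFractionRing.lift_algebraMap]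
      exact Ideal.kerLiftAlg_mk ψ a⟩
  exact ⟨AlgEquiv.ofBijective τ ⟨τ.injective, fun y =>
    AlgHom.mem_fieldRange.mp (hτ ▸ IntermediateField.mem_top)⟩⟩

namespace QuarticModel

open Finset

variable (k : Type*) {ι : Type*} [Field k] [DecidableEq ι]

/-- `X (some p)` becomes the polynomial variable and `X none` becomes `X p`. -/
noncomputable def toPolynomial (p : ι) :
    MvPolynomial (Option ι) k ≃ₐ[k] Polynomial (MvPolynomial ι k) :=
  (renameEquiv k (Equiv.swap none (some p))).trans (optionEquivLeft k ι)

@[simp]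
theorem toPolynomial_X_none (p : ι) : toPolynomial k p (X none) = Polynomial.C (X p) := by
  simp [toPolynomial]

@[simp]
theorem toPolynomial_X_some_self (p : ι) : toPolynomial k p (X (some p)) = Polynomial.X := by
  simp [toPolynomial]

@[simp]
theorem toPolynomial_X_some {i p : ι} (h : i ≠ p) :
    toPolynomial k p (X (some i)) = Polynomial.C (X i) := by
  simp [toPolynomial, Equiv.swap_apply_of_ne_of_ne, h]

variable [Fintype ι]

noncomputable def equation (m : ι) : MvPolynomial (Option ι) k :=
  X none ^ 4 * (X (some m) * (X (some m) - 1) ^ 2) -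
    ∏ i ∈ univ.erase m, (X (some i) * (X (some i) - 1) ^ 2)

noncomputable def restProd (m p : ι) : MvPolynomial (Option ι) k :=
  ∏ i ∈ (univ.erase m).erase p, (X (some i) * (X (some i) - 1) ^ 2)

/-- The strict transform of `equation k m` under `blowUpChart (some m) (some p)`. -/
noncomputable def chartEquation (m p : ι) : MvPolynomial (Option ι) k :=
  (X none ^ 4 * X (some m) ^ 3 - restProd k m p) * X (some p) +
    X none ^ 4 * X (some m) ^ 2 * (1 - X (some m))

noncomputable def targetRestProd (m p : ι) : MvPolynomial ι k :=
  ∏ i ∈ (univ.erase m).erase p, (X i * (X i - 1) ^ 2)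

noncomputable def slope (m p : ι) : MvPolynomial ι k :=
  X p ^ 4 * X m ^ 3 - targetRestProd k m p

noncomputable def intercept (m p : ι) : MvPolynomial ι k :=
  X p ^ 4 * X m ^ 2 * (1 - X m)

noncomputable def root (m p : ι) : FractionRing (MvPolynomial ι k) :=
  -algebraMap _ _ (intercept k m p) / algebraMap _ _ (slope k m p)

noncomputable def chartParam (m p : ι) :
    MvPolynomial (Option ι) k →ₐ[k] FractionRing (MvPolynomial ι k) :=
  ((Polynomial.aeval (root k m p)).restrictScalars k).comp (toPolynomial k p).toAlgHom

/-- `z ↦ sₚ`, `tₘ ↦ 1 + sₘ (β - 1)`, `tₚ ↦ β`, `tᵢ ↦ sᵢ`, where `β = root k m p`. -/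
noncomputable def param (m p : ι) :
    MvPolynomial (Option ι) k →ₐ[k] FractionRing (MvPolynomial ι k) :=
  (chartParam k m p).comp (blowUpChart (some m) (some p))

variable {k}

noncomputable def testPoint (m p : ι) (a : k) : ι → k :=
  Function.update (Function.update (fun _ => 2) m a) p 0

variable {m p : ι}

theorem toPolynomial_chartEquation (hpm : p ≠ m) :
    toPolynomial k p (chartEquation k m p) =
      Polynomial.C (slope k m p) * Polynomial.X + Polynomial.C (intercept k m p) := by
  have hrest : toPolynomial k p (restProd k m p) = Polynomial.C (targetRestProd k m p) := by
    simp only [restProd, targetRestProd, map_prod, map_mul, map_pow, map_sub, map_one]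
    refine prod_congr rfl fun i hi => ?_
    rw [toPolynomial_X_some k (ne_of_mem_erase hi)]
  simp only [chartEquation, slope, intercept, map_add, map_mul, map_sub, map_pow, map_one, hrest,
    toPolynomial_X_none, toPolynomial_X_some_self, toPolynomial_X_some k hpm.symm]

theorem eval_X_pow_four_mul_sub_targetRestProd_ne_zero [CharZero k] (q : MvPolynomial ι k)
    (a : k) : eval (testPoint m p a) (X p ^ 4 * q - targetRestProd k m p) ≠ 0 := by
  have hrest : eval (testPoint m p a) (targetRestProd k m p) ≠ 0 := by
    simp only [targetRestProd, map_prod, map_mul, map_pow, map_sub, map_one, eval_X]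
    refine prod_ne_zero_iff.mpr fun i hi => ?_
    obtain ⟨hip, him⟩ : i ≠ p ∧ i ≠ m := by simpa using hi
    norm_num [testPoint, Function.update_of_ne hip, Function.update_of_ne him]
  simpa [testPoint] using hrest

theorem eval_slope_ne_zero [CharZero k] (a : k) : eval (testPoint m p a) (slope k m p) ≠ 0 :=
  eval_X_pow_four_mul_sub_targetRestProd_ne_zero _ a

theorem slope_ne_zero [CharZero k] : slope k m p ≠ 0 := fun h =>
  eval_slope_ne_zero (m := m) (p := p) (0 : k) (by rw [h, map_zero])

theorem isRelPrime_slope_intercept [CharZero k] (hpm : p ≠ m) :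
    IsRelPrime (slope k m p) (intercept k m p) := by
  have key : ∀ (q : MvPolynomial ι k) (a : k), Irreducible q → eval (testPoint m p a) q = 0 →
      IsRelPrime (slope k m p) q := fun q a hq hqa =>
    (hq.isRelPrime_iff_not_dvd.mpr fun h => eval_slope_ne_zero (m := m) (p := p) a <|
      zero_dvd_iff.mp (hqa ▸ map_dvd (eval _) h)).symm
  have h_one_sub : Irreducible (1 - X m : MvPolynomial ι k) := by
    simpa using (Associated.refl _).neg_left.symm.irreducible (irreducible_X_sub_C (R := k) m 1)
  refine (((key _ 0 X_prime.irreducible ?_).pow_right).mul_right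
    ((key _ 0 X_prime.irreducible ?_).pow_right)).mul_right (key _ 1 h_one_sub ?_)
  all_goals simp [testPoint, Function.update_of_ne hpm.symm]

theorem algebraMap_slope_mul_root_add [CharZero k] :
    algebraMap _ _ (slope k m p) * root k m p + algebraMap _ _ (intercept k m p) = 0 := by
  have : algebraMap _ (FractionRing (MvPolynomial ι k)) (slope k m p) ≠ 0 :=
    IsFractionRing.to_map_eq_zero_iff.not.mpr slope_ne_zero
  rw [root, mul_div_cancel₀ _ this, neg_add_cancel]

theorem chartParam_apply (f : MvPolynomial (Option ι) k) :
    chartParam k m p f = Polynomial.aeval (root k m p) (toPolynomial k p f) := rfl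

theorem ker_chartParam [CharZero k] (hpm : p ≠ m) :
    RingHom.ker (chartParam k m p) = Ideal.span {chartEquation k m p} := by
  ext f
  rw [RingHom.mem_ker, Ideal.mem_span_singleton, ← map_dvd_iff (toPolynomial k p),
    toPolynomial_chartEquation hpm, chartParam_apply]
  exact (Polynomial.C_mul_X_add_C_dvd_iff_aeval_eq_zero (isRelPrime_slope_intercept hpm)
    (algebraMap_slope_mul_root_add (k := k) (m := m) (p := p)) _).symm

theorem blowUpChart_equation (hpm : p ≠ m) :
    blowUpChart (some m) (some p) (equation k m) = (X (some p) - 1) ^ 2 * chartEquation k m p := by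
  have hrest : blowUpChart (some m) (some p) (restProd k m p) = restProd k m p := by
    simp only [restProd, map_prod, map_mul, map_pow, map_sub, map_one]
    refine prod_congr rfl fun i hi => ?_
    rw [blowUpChart_X_of_ne _ (by simpa using (mem_erase.mp (mem_of_mem_erase hi)).1)]
  have hsplit : equation k m = X none ^ 4 * (X (some m) * (X (some m) - 1) ^ 2) -
      X (some p) * (X (some p) - 1) ^ 2 * restProd k m p := by
    rw [equation, restProd, ← mul_prod_erase (univ.erase m)
      (fun i => (X (some i) * (X (some i) - 1) ^ 2 : MvPolynomial (Option ι) k))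
      (mem_erase.mpr ⟨hpm, mem_univ p⟩)]
  rw [hsplit, chartEquation]
  simp only [map_sub, map_mul, map_pow, map_one, hrest, blowUpChart_X_self,
    blowUpChart_X_of_ne _ (Option.some_ne_none m).symm,
    blowUpChart_X_of_ne _ (Option.some_inj.not.mpr hpm)]
  ring

theorem isRelPrime_equation_X_sub_one [CharZero k] (hpm : p ≠ m) :
    IsRelPrime (equation k m) (X (some p) - 1) := by
  have hirr : Irreducible (X (some p) - 1 : MvPolynomial (Option ι) k) := by
    simpa using irreducible_X_sub_C (R := k) (some p) 1
  refine (hirr.isRelPrime_iff_not_dvd.mpr fun h => ?_).symm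
  -- at `z = tₚ = 1`, `tₘ = 2` the factor `tₚ(tₚ - 1)²` kills the product and `g = 2`
  have hprod : eval (Function.update (fun _ => 1) (some m) 2)
      (∏ i ∈ univ.erase m, (X (some i) * (X (some i) - 1) ^ 2) : MvPolynomial (Option ι) k) =
        0 := by
    rw [map_prod]
    exact prod_eq_zero (mem_erase.mpr ⟨hpm, mem_univ p⟩) (by simp [hpm])
  have := map_dvd (eval (Function.update (fun _ => (1 : k)) (some m) 2)) h
  norm_num [equation, hprod, Function.update_of_ne (Option.some_inj.not.mpr hpm),
    Function.update_of_ne (Option.some_ne_none m).symm] at this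

theorem ker_param [CharZero k] (hpm : p ≠ m) :
    RingHom.ker (param k m p) = Ideal.span {equation k m} := by
  have hmp : (some m : Option ι) ≠ some p := Option.some_inj.not.mpr hpm.symm
  exact RingHom.ker_comp_eq_span_singleton (blowUpChart_injective hmp) (ker_chartParam hpm)
    (by simp [hmp.symm]) (blowUpChart_equation hpm) (isRelPrime_equation_X_sub_one hpm)
    (exists_blowUpChart_eq_pow_mul hmp)
theorem root_sub_one_ne_zero [CharZero k] : root k m p - 1 ≠ 0 := by
  have hslope : algebraMap _ (FractionRing (MvPolynomial ι k)) (slope k m p) ≠ 0 :=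
    IsFractionRing.to_map_eq_zero_iff.not.mpr slope_ne_zero
  have hsum : -intercept k m p - slope k m p = -(X p ^ 4 * X m ^ 2 - targetRestProd k m p) := by
    rw [intercept, slope]
    ring
  have hsum_ne : X p ^ 4 * X m ^ 2 - targetRestProd k m p ≠ 0 := fun h =>
    eval_X_pow_four_mul_sub_targetRestProd_ne_zero (m := m) (p := p) _ (0 : k) (by rw [h, map_zero])
  rw [root, div_sub_one hslope, ← map_neg, ← map_sub, hsum]
  exact div_ne_zero (IsFractionRing.to_map_eq_zero_iff.not.mpr (neg_ne_zero.mpr hsum_ne)) hslope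

theorem adjoin_range_param [CharZero k] (hpm : p ≠ m) :
    IntermediateField.adjoin k (Set.range (param k m p)) = ⊤ := by
  refine IntermediateField.eq_top_of_algebraMap_X_mem fun i => ?_
  have hmem : ∀ f, param k m p f ∈ IntermediateField.adjoin k (Set.range (param k m p)) :=
    fun f => IntermediateField.subset_adjoin _ _ ⟨f, rfl⟩
  have hpm' : some p ≠ some m := Option.some_inj.not.mpr hpm
  by_cases him : i = m
  · subst him
    have hval : algebraMap (MvPolynomial ι k) (FractionRing (MvPolynomial ι k)) (X i) =
        (param k i p (X (some i)) - 1) / (param k i p (X (some p)) - 1) := by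
      simp [param, chartParam_apply, hpm', hpm.symm, root_sub_one_ne_zero]
    rw [hval]
    exact div_mem (sub_mem (hmem _) (one_mem _)) (sub_mem (hmem _) (one_mem _))
  by_cases hip : i = p
  · subst hip
    convert hmem (X none) using 1
    simp [param, chartParam_apply]
  · convert hmem (X (some i)) using 1
    simp [param, chartParam_apply, him, hip]

end QuarticModel

/-- for `n ≥ 2` and
`g = z⁴·tₙ(tₙ - 1)² - t₁t₂⋯t_{n-1}(t₁ - 1)²(t₂ - 1)²⋯(t_{n-1} - 1)² ∈ ℂ[t₁,…,tₙ,z]`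
(the variable `some i` is `tᵢ` and `none` is `z`), the quotient ring
`ℂ[t₁,…,tₙ,z]/(g)` is an integral domain whose field of fractions is isomorphic as a
`ℂ`-algebra to the rational function field `ℂ(s₁,…,sₙ)`. -/
theorem stmt_12 (n : ℕ) (hn : 2 ≤ n)
    (g : MvPolynomial (Option (Fin n)) ℂ)
    (hg : g = X none ^ 4 *
          ((X (some ⟨n - 1, by omega⟩) : MvPolynomial (Option (Fin n)) ℂ) *
            (X (some ⟨n - 1, by omega⟩) - 1) ^ 2) -
        ∏ i ∈ Finset.univ.erase (⟨n - 1, by omega⟩ : Fin n),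
          ((X (some i) : MvPolynomial (Option (Fin n)) ℂ) * (X (some i) - 1) ^ 2)) :
    IsDomain (MvPolynomial (Option (Fin n)) ℂ ⧸ Ideal.span {g}) ∧
      Nonempty ((FractionRing (MvPolynomial (Option (Fin n)) ℂ ⧸ Ideal.span {g})) ≃ₐ[ℂ]
        FractionRing (MvPolynomial (Fin n) ℂ)) := by
  have hpm : (⟨n - 2, by omega⟩ : Fin n) ≠ ⟨n - 1, by omega⟩ := by
    simp only [ne_eq, Fin.mk.injEq]
    omega
  have hg' : g = QuarticModel.equation ℂ (⟨n - 1, by omega⟩ : Fin n) := hg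
  rw [hg', ← QuarticModel.ker_param hpm]
  have := RingHom.ker_isPrime (QuarticModel.param ℂ (⟨n - 1, by omega⟩ : Fin n) ⟨n - 2, by omega⟩)
  exact ⟨Ideal.Quotient.isDomain _,
    nonempty_fractionRing_quotient_ker_algEquiv _ (QuarticModel.adjoin_range_param hpm)⟩
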